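/- For n ≥ 3 and every integer k ≥ 1, each of the three model classes 2H, kH − (k−1)E_1, and kH − (k−1)E_1 − E_2 in ℤ^{1,n} can be written as a finite linear combination with nonnegative integer coefficients of exceptional classes in ℰ_K. (Step in the proof of Theorem 2.5: each model class of a positive-square sphere class is a combination of exceptional classes.) -/

import Mathlib

open Finset

noncomputable section

/-- The intersection pairing on ℝ^{1,n}: coordinate `0` is the coefficient of `H`,
coordinate `i.succ` is the coefficient of `E_{i+1}`.  `H·H = 1`, `E_i·E_i = -1`,
distinct basis vectors are orthogonal. -/
def ip (n : ℕ) (x y : Fin (n + 1) → ℝ) : ℝ :=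
  x 0 * y 0 - ∑ i : Fin n, x i.succ * y i.succ

/-- The canonical class `K = -3H + E_1 + ⋯ + E_n`. -/
def Kc (n : ℕ) : Fin (n + 1) → ℝ := fun j => if (j : ℕ) = 0 then -3 else 1

/-- The reflection `x ↦ x + (x·l)l` along `l`. -/
def reflAlong (n : ℕ) (l : Fin (n + 1) → ℝ) : Function.End (Fin (n + 1) → ℝ) :=
  fun x => x + ip n x l • l

/-- The simple roots: `l_0 = H - E_1 - E_2 - E_3` and `l_i = E_i - E_{i+1}`
for `1 ≤ i ≤ n - 1`. -/
def root (n : ℕ) (i : Fin n) : Fin (n + 1) → ℝ :=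
  if (i : ℕ) = 0 then
    fun j => if (j : ℕ) = 0 then 1 else if (j : ℕ) ≤ 3 then -1 else 0
  else
    fun j => if (j : ℕ) = (i : ℕ) then 1 else if (j : ℕ) = (i : ℕ) + 1 then -1 else 0

/-- The Weyl group `W_n`, generated by the simple reflections `s_{l_0}, …, s_{l_{n-1}}`.
(The generators are involutions, so the submonoid they generate coincides with the
subgroup they generate.) -/
def Wgroup (n : ℕ) : Submonoid (Function.End (Fin (n + 1) → ℝ)) :=
  Submonoid.closure (Set.range fun i : Fin n => reflAlong n (root n i))

/-- The class `E_n`. -/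
def En (n : ℕ) : Fin (n + 1) → ℝ := fun j => if (j : ℕ) = n then 1 else 0

/-- The set `ℰ_K` of exceptional classes: the `W_n`-orbit of `E_n`. -/
def EK (n : ℕ) : Set (Fin (n + 1) → ℝ) := {e | ∃ w ∈ Wgroup n, e = w (En n)}

/-- `v` is a finite linear combination with nonnegative integer coefficients of
exceptional classes in `ℰ_K`. -/
def IsNNIntCombOfExceptional (n : ℕ) (v : Fin (n + 1) → ℝ) : Prop :=
  ∃ (S : Finset (Fin (n + 1) → ℝ)) (c : (Fin (n + 1) → ℝ) → ℕ),
    ↑S ⊆ EK n ∧ v = ∑ E ∈ S, (c E : ℝ) • E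

/-- The model class `2H`. -/
def twoH (n : ℕ) : Fin (n + 1) → ℝ := fun j => if (j : ℕ) = 0 then 2 else 0

/-- The model class `kH - (k-1)E_1`. -/
def modelA (n k : ℕ) : Fin (n + 1) → ℝ := fun j =>
  if (j : ℕ) = 0 then (k : ℝ) else if (j : ℕ) = 1 then -((k : ℝ) - 1) else 0

/-- The model class `kH - (k-1)E_1 - E_2`. -/
def modelB (n k : ℕ) : Fin (n + 1) → ℝ := fun j =>
  if (j : ℕ) = 0 then (k : ℝ)
  else if (j : ℕ) = 1 then -((k : ℝ) - 1)
  else if (j : ℕ) = 2 then -1 else 0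

/-!
Reflecting `E_n` successively along `E_m - E_{m+1}` produces every `E_m`, and reflecting `E_3`
along `H - E_1 - E_2 - E_3` produces the line class `H - E_1 - E_2`; so these are exceptional.
The model classes are nonnegative combinations of them:
`2H = 2E_1 + 2E_2 + 2(H - E_1 - E_2)`, `kH - (k-1)E_1 = E_1 + kE_2 + k(H - E_1 - E_2)` and
`kH - (k-1)E_1 - E_2 = E_1 + (k-1)E_2 + k(H - E_1 - E_2)`.
-/

def basisE (n m : ℕ) : Fin (n + 1) → ℝ := fun j => if (j : ℕ) = m then 1 else 0

def lineClass (n : ℕ) : Fin (n + 1) → ℝ := fun j =>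
  if (j : ℕ) = 0 then 1 else if (j : ℕ) ≤ 2 then -1 else 0

lemma ip_basisE_succ {n : ℕ} (i : Fin n) (y : Fin (n + 1) → ℝ) :
    ip n (basisE n (i + 1)) y = -y i.succ := by
  rw [ip, Finset.sum_eq_single i]
  · simp [basisE]
  · intro j _ hj
    simp [basisE, Fin.val_inj, hj]
  · simp

lemma reflAlong_root_basisE_succ {n m : ℕ} (hm : 1 ≤ m) (hmn : m < n) :
    reflAlong n (root n ⟨m, hmn⟩) (basisE n (m + 1)) = basisE n m := by
  have hpair : ip n (basisE n (m + 1)) (root n ⟨m, hmn⟩) = 1 := by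
    refine (ip_basisE_succ ⟨m, hmn⟩ _).trans ?_
    simp [root, show m ≠ 0 by omega]
  funext j
  rw [reflAlong, hpair, one_smul]
  simp only [Pi.add_apply, basisE, root, show m ≠ 0 by omega, if_false]
  split_ifs <;> first | (exfalso; omega) | norm_num

lemma reflAlong_root_zero_basisE_three {n : ℕ} (hn : 3 ≤ n) :
    reflAlong n (root n ⟨0, by omega⟩) (basisE n 3) = lineClass n := by
  have hpair : ip n (basisE n 3) (root n ⟨0, by omega⟩) = 1 := by
    refine (ip_basisE_succ ⟨2, by omega⟩ _).trans ?_
    simp [root]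
  funext j
  rw [reflAlong, hpair, one_smul]
  simp only [Pi.add_apply, basisE, root, lineClass, if_true]
  split_ifs <;> first | (exfalso; omega) | norm_num

lemma reflAlong_root_mem_EK {n : ℕ} (i : Fin n) {e : Fin (n + 1) → ℝ} (he : e ∈ EK n) :
    reflAlong n (root n i) e ∈ EK n := by
  obtain ⟨w, hw, rfl⟩ := he
  exact ⟨reflAlong n (root n i) * w, mul_mem (Submonoid.subset_closure ⟨i, rfl⟩) hw, rfl⟩

lemma basisE_mem_EK {n m : ℕ} (hm : 1 ≤ m) (hmn : m ≤ n) : basisE n m ∈ EK n := by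
  induction hmn using Nat.decreasingInduction with
  | self => exact ⟨1, one_mem _, rfl⟩
  | of_succ m hmn ih =>
    rw [← reflAlong_root_basisE_succ hm hmn]
    exact reflAlong_root_mem_EK _ (ih (by omega))

lemma lineClass_mem_EK {n : ℕ} (hn : 3 ≤ n) : lineClass n ∈ EK n := by
  rw [← reflAlong_root_zero_basisE_three hn]
  exact reflAlong_root_mem_EK _ (basisE_mem_EK (by norm_num) hn)

lemma isNNIntCombOfExceptional_of_mem_span {n : ℕ} {v : Fin (n + 1) → ℝ}
    (hv : v ∈ Submodule.span ℕ (EK n)) : IsNNIntCombOfExceptional n v := by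
  obtain ⟨c, hc, rfl⟩ := Submodule.mem_span_set.mp hv
  exact ⟨c.support, c, hc, by simp [Finsupp.sum, Nat.cast_smul_eq_nsmul]⟩

lemma combination_mem_span_EK {n : ℕ} (hn : 3 ≤ n) (a b c : ℕ) :
    a • basisE n 1 + b • basisE n 2 + c • lineClass n ∈ Submodule.span ℕ (EK n) := by
  have mem {e} (he : e ∈ EK n) := Submodule.subset_span (R := ℕ) he
  exact add_mem (add_mem (Submodule.smul_mem _ a (mem (basisE_mem_EK le_rfl (by omega))))
    (Submodule.smul_mem _ b (mem (basisE_mem_EK (by norm_num) (by omega)))))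
    (Submodule.smul_mem _ c (mem (lineClass_mem_EK hn)))

lemma combination_apply (n a b c : ℕ) (j : Fin (n + 1)) :
    (a • basisE n 1 + b • basisE n 2 + c • lineClass n) j =
      if (j : ℕ) = 0 then (c : ℝ) else if (j : ℕ) = 1 then (a : ℝ) - c
      else if (j : ℕ) = 2 then (b : ℝ) - c else 0 := by
  rw [Pi.add_apply, Pi.add_apply, Pi.smul_apply, Pi.smul_apply, Pi.smul_apply]
  simp only [basisE, lineClass, nsmul_eq_mul]
  split_ifs <;> first | (exfalso; omega) | ring

lemma twoH_eq (n : ℕ) : twoH n = 2 • basisE n 1 + 2 • basisE n 2 + 2 • lineClass n := by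
  funext j
  rw [combination_apply, twoH]
  split_ifs <;> norm_num

lemma modelA_eq (n k : ℕ) : modelA n k = 1 • basisE n 1 + k • basisE n 2 + k • lineClass n := by
  funext j
  rw [combination_apply, modelA]
  split_ifs <;> push_cast <;> ring

lemma modelB_eq (n : ℕ) {k : ℕ} (hk : 1 ≤ k) :
    modelB n k = 1 • basisE n 1 + (k - 1) • basisE n 2 + k • lineClass n := by
  funext j
  rw [combination_apply, modelB]
  split_ifs <;> push_cast [hk] <;> ring

theorem model_classes_are_combinations_of_exceptional
    (n k : ℕ) (hn : 3 ≤ n) (hk : 1 ≤ k) :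
    IsNNIntCombOfExceptional n (twoH n) ∧
    IsNNIntCombOfExceptional n (modelA n k) ∧
    IsNNIntCombOfExceptional n (modelB n k) := by
  refine ⟨?_, ?_, ?_⟩ <;> apply isNNIntCombOfExceptional_of_mem_span
  · rw [twoH_eq]; exact combination_mem_span_EK hn 2 2 2
  · rw [modelA_eq]; exact combination_mem_span_EK hn 1 k k
  · rw [modelB_eq n hk]; exact combination_mem_span_EK hn 1 (k - 1) k
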